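/- Monotonicity construction: Let U_1 and U_2 be TA templates with conjunctive guards and let x = (c_0,t_0)(c_1,t_1)… be a timed computation of (U_1,U_2)^{(1,n)} with n ≥ 1. Define the sequence y by y_v = (x_v(1,1), x_v(2,1), …, x_v(2,n), ŝ_v(2,n+1)), i.e., every original instance behaves exactly as in x and the added (n+1)-th instance of U_2 follows the idle local computation (it remains in its initial state ŝ_2 with clocks advancing by the elapsed time). Then y is a timed computation of (U_1,U_2)^{(1,n+1)}, and its projection onto each original instance equals the corresponding projection of x. -/

import Mathlib

open scoped ENNReal NNReal

namespace PNTA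

/-! ### Basic ingredients: comparisons and clock constraints -/

/-- Comparison operators `<, ≤, >, ≥, =`. -/
inductive Cmp : Type
  | lt | le | gt | ge | eq

/-- Evaluation of a comparison operator on nonnegative reals. -/
def Cmp.eval : Cmp → NNReal → NNReal → Prop
  | .lt, a, b => a < b
  | .le, a, b => a ≤ b
  | .gt, a, b => b < a
  | .ge, a, b => b ≤ a
  | .eq, a, b => a = b

/-- Clock constraints `TC(C)`: Boolean combinations of comparisons of clocks with
clocks or with nonnegative rational constants. -/
inductive ClockConstraint (C : Type) : Type
  | tt
  | neg (g : ClockConstraint C)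
  | disj (g₁ g₂ : ClockConstraint C)
  | cmpClock (op : Cmp) (c₁ c₂ : C)
  | cmpConst (op : Cmp) (c : C) (q : ℚ≥0)

/-- Satisfaction of a clock constraint by a clock valuation. -/
def ClockConstraint.sat {C : Type} (u : C → NNReal) : ClockConstraint C → Prop
  | .tt => True
  | .neg g => ¬ g.sat u
  | .disj g₁ g₂ => g₁.sat u ∨ g₂.sat u
  | .cmpClock op c₁ c₂ => op.eval (u c₁) (u c₂)
  | .cmpConst op c q => op.eval (u c) (q : NNReal)

/-! ### Parameterized networks of timed automata with conjunctive guards -/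

/-- A parameterized network of `k` timed automaton templates
`U_l = ⟨S_l, ŝ_l, C_l, Γ_l, τ_l, I_l⟩` with **conjunctive guards**.
A conjunctive guard assigns to every template `h` a set of states of `U_h`
(the disjunction `ŝ_h ∨ s_h¹ ∨ ⋯`), which must contain the initial state `ŝ_h`;
it is satisfied by a global state when every *other* instance of every template `h`
is in a state belonging to the corresponding set. -/
structure ConjPNTA (k : ℕ) : Type 1 where
  /-- states of each template -/
  State : Fin k → Type
  stateFintype : ∀ l, Fintype (State l)
  /-- initial state of each template -/
  init : ∀ l, State l
  /-- clock variables of each template -/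
  Clock : Fin k → Type
  clockFintype : ∀ l, Fintype (Clock l)
  /-- transitions `s —(g,r,γ)→ t`: source, clock constraint, reset set, conjunctive guard, target -/
  trans : ∀ l, Set (State l × ClockConstraint (Clock l) × Set (Clock l) ×
      ((h : Fin k) → Set (State h)) × State l)
  trans_finite : ∀ l, (trans l).Finite
  /-- guards are conjunctive: every disjunct contains the initial state -/
  guards_conj : ∀ l tr, tr ∈ trans l → ∀ h, init h ∈ tr.2.2.2.1 h
  /-- state invariants -/
  inv : ∀ l, State l → ClockConstraint (Clock l)
  inv_init : ∀ l, inv l (init l) = ClockConstraint.tt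

variable {k : ℕ}

/-- `|U_l|`: the number of states of template `l`. -/
def ConjPNTA.size (A : ConjPNTA k) (l : Fin k) : ℕ :=
  @Fintype.card (A.State l) (A.stateFintype l)

lemma ConjPNTA.size_pos (A : ConjPNTA k) (l : Fin k) : 0 < A.size l :=
  @Fintype.card_pos _ (A.stateFintype l) ⟨A.init l⟩

/-- A configuration of the PNTA `(U_1,…,U_k)^{(n_1,…,n_k)}`: each instance `U_l^i`
(`l < k`, `i < n_l`) has a current state and a clock valuation satisfying the
invariant of that state. -/
structure Config (A : ConjPNTA k) (n : Fin k → ℕ) : Type where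
  st : ∀ l, Fin (n l) → A.State l
  cl : ∀ l, Fin (n l) → A.Clock l → NNReal
  inv_sat : ∀ l i, (A.inv l (st l i)).sat (cl l i)

/-- The initial configuration: every instance in its initial state, all clocks `0`. -/
def initConfig (A : ConjPNTA k) (n : Fin k → ℕ) : Config A n where
  st := fun l _ => A.init l
  cl := fun _ _ _ => 0
  inv_sat := fun l _ => by rw [A.inv_init l]; exact trivial

/-- The global state of configuration `c` satisfies the conjunctive guard `γ`
from the point of view of instance `(l, i)`: every other instance is in one of
the allowed states. -/
def guardSat {A : ConjPNTA k} {n : Fin k → ℕ} (c : Config A n) (l : Fin k) (i : Fin (n l))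
    (γ : (h : Fin k) → Set (A.State h)) : Prop :=
  ∀ p : Σ h, Fin (n h), p ≠ ⟨l, i⟩ → c.st p.1 p.2 ∈ γ p.1

/-- Delay transition `c →d c'`: all clocks of all instances advance by `d`,
states are unchanged, and all invariants hold throughout the delay. -/
def DelayStep {A : ConjPNTA k} {n : Fin k → ℕ} (d : NNReal) (c c' : Config A n) : Prop :=
  c'.st = c.st ∧
  (∀ l i x, c'.cl l i x = c.cl l i x + d) ∧
  (∀ l i (d' : NNReal), d' ≤ d → (A.inv l (c.st l i)).sat fun x => c.cl l i x + d')

/-- Synchronization transition `c →γ c'`: exactly one instance `U_l^i` fires a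
transition `s —(g,r,γ)→ t` of `τ_l`; its current state is `s`, its clocks satisfy `g`,
the global state satisfies the conjunctive guard `γ`, its clocks in `r` are reset to 0,
and all other instances are unchanged. -/
def SyncStep {A : ConjPNTA k} {n : Fin k → ℕ} (c c' : Config A n) : Prop :=
  ∃ (l : Fin k) (i : Fin (n l)), ∃ tr ∈ A.trans l,
    tr.1 = c.st l i ∧
    tr.2.1.sat (c.cl l i) ∧
    guardSat c l i tr.2.2.2.1 ∧
    c'.st l i = tr.2.2.2.2 ∧
    (∀ x, (x ∈ tr.2.2.1 → c'.cl l i x = 0) ∧ (x ∉ tr.2.2.1 → c'.cl l i x = c.cl l i x)) ∧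
    (∀ p : Σ h, Fin (n h), p ≠ ⟨l, i⟩ → c'.st p.1 p.2 = c.st p.1 p.2 ∧ c'.cl p.1 p.2 = c.cl p.1 p.2)

/-- A step of a timed computation: a delay transition with positive delay
(time advances accordingly) or a synchronization transition (time unchanged). -/
def Step {A : ConjPNTA k} {n : Fin k → ℕ} (c c' : Config A n) (t t' : NNReal) : Prop :=
  (∃ d : NNReal, 0 < d ∧ DelayStep d c c' ∧ t' = t + d) ∨ (SyncStep c c' ∧ t' = t)

/-- A timed computation starting at configuration `c₀` at time `0`: a finite or
infinite sequence of configuration/time pairs (represented as a partial function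
on positions with downward closed domain) whose consecutive elements are related
by delay or synchronization transitions. -/
structure TimedComp (A : ConjPNTA k) (n : Fin k → ℕ) (c₀ : Config A n) : Type where
  seq : ℕ → Option (Config A n × NNReal)
  zero_def : seq 0 = some (c₀, 0)
  downward : ∀ v, (seq (v + 1)).isSome → (seq v).isSome
  step : ∀ v c t c' t', seq v = some (c, t) → seq (v + 1) = some (c', t') → Step c c' t t'

namespace TimedComp

variable {A : ConjPNTA k} {n : Fin k → ℕ} {c₀ : Config A n}

/-- An infinite timed computation. -/
def Infinite (x : TimedComp A n c₀) : Prop := ∀ v, (x.seq v).isSome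

/-- A (not necessarily maximal) finite timed computation. -/
def Finite (x : TimedComp A n c₀) : Prop := ∃ v, x.seq v = none

/-- A deadlocked timed computation: maximal finite, i.e. all transitions are
disabled at its final configuration. -/
def Deadlocked (x : TimedComp A n c₀) : Prop :=
  ∃ v c t, x.seq v = some (c, t) ∧ x.seq (v + 1) = none ∧
    ∀ c' : Config A n, ¬ ((∃ d : NNReal, 0 < d ∧ DelayStep d c c') ∨ SyncStep c c')

/-- The time stamp at position `v` (junk value `0` outside the domain). -/
def timeAt (x : TimedComp A n c₀) (v : ℕ) : NNReal := ((x.seq v).map Prod.snd).getD 0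

end TimedComp

/-! ### s-paths (continuous-time signals induced by timed computations) -/

/-- An s-path: a continuous-time signal of configurations, together with its
(possibly infinite) length. -/
structure SPath (A : ConjPNTA k) (n : Fin k → ℕ) : Type where
  len : ℝ≥0∞
  toFun : NNReal → Config A n

/-- The suffix `ρ⌊t` of an s-path. -/
noncomputable def SPath.suffix {A : ConjPNTA k} {n : Fin k → ℕ} (ρ : SPath A n) (t : NNReal) : SPath A n where
  len := ρ.len - (t : ℝ≥0∞)
  toFun := fun s => ρ.toFun (t + s)

/-- The timed computation `x` induces the s-path `ρ`: for every step of `x` from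
`(c_v,t_v)` to `(c_{v+1},t_{v+1})` and every time `s ∈ [t_v, t_{v+1})`, `ρ(s)` has
the states of `c_v` with clocks advanced by `s - t_v`; the length of `ρ` is the
supremum of the time stamps (for an infinite computation), resp. the final time
stamp (for a finite one, at which the final configuration persists). -/
def Induces {A : ConjPNTA k} {n : Fin k → ℕ} {c₀ : Config A n}
    (x : TimedComp A n c₀) (ρ : SPath A n) : Prop :=
  (∀ v c t c' t', x.seq v = some (c, t) → x.seq (v + 1) = some (c', t') →
    ∀ s : NNReal, t ≤ s → s < t' →
      (ρ.toFun s).st = c.st ∧ ∀ l i cx, (ρ.toFun s).cl l i cx = c.cl l i cx + (s - t)) ∧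
  (x.Infinite → ρ.len = ⨆ v, (x.timeAt v : ℝ≥0∞)) ∧
  (∀ v c t, x.seq v = some (c, t) → x.seq (v + 1) = none →
    ρ.len = (t : ℝ≥0∞) ∧ (ρ.toFun t).st = c.st ∧ ∀ l i cx, (ρ.toFun t).cl l i cx = c.cl l i cx)

/-- `tcomp(ρ)`: the set of timed computations (from `c₀`) inducing the s-path `ρ`. -/
def tcomp {A : ConjPNTA k} {n : Fin k → ℕ} (c₀ : Config A n) (ρ : SPath A n) :
    Set (TimedComp A n c₀) :=
  {x | Induces x ρ}

/-- `|ρ| = ω` : `ρ` is (induced by) an infinite timed computation from `c₀`. -/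
def SPath.IsInfiniteFrom {A : ConjPNTA k} {n : Fin k → ℕ} (c₀ : Config A n) (ρ : SPath A n) : Prop :=
  ∃ x : TimedComp A n c₀, Induces x ρ ∧ x.Infinite

/-- `|ρ| < ω` : `ρ` is induced by a finite timed computation from `c₀`. -/
def SPath.IsFiniteFrom {A : ConjPNTA k} {n : Fin k → ℕ} (c₀ : Config A n) (ρ : SPath A n) : Prop :=
  ∃ x : TimedComp A n c₀, Induces x ρ ∧ x.Finite

/-- `deadlock(ρ)` : `ρ` is induced by a deadlocked timed computation from `c₀`. -/
def SPath.IsDeadlockedFrom {A : ConjPNTA k} {n : Fin k → ℕ} (c₀ : Config A n) (ρ : SPath A n) : Prop :=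
  ∃ x : TimedComp A n c₀, Induces x ρ ∧ x.Deadlocked

/-! ### IMTL formulae and their continuous-time semantics -/

/-- IMTL path formulae over atomic propositions `α`: built from `⊤` and atoms by
Boolean operators (`∧`, `¬`) and time-constrained until `Φ U_{∼q} Ψ` with
`∼ ∈ {<,≤,>,≥,=}` and `q ∈ ℚ≥0`. -/
inductive IMTL (α : Type) : Type
  | tt
  | atom (a : α)
  | and (φ ψ : IMTL α)
  | not (φ : IMTL α)
  | untl (op : Cmp) (q : ℚ≥0) (φ ψ : IMTL α)

/-- Satisfaction of an IMTL path formula on an s-path, given a valuation of the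
atomic propositions on configurations. -/
def satIMTL {A : ConjPNTA k} {n : Fin k → ℕ} {α : Type} (val : α → Config A n → Prop) :
    IMTL α → SPath A n → Prop
  | .tt, _ => True
  | .atom a, ρ => val a (ρ.toFun 0)
  | .and φ ψ, ρ => satIMTL val φ ρ ∧ satIMTL val ψ ρ
  | .not φ, ρ => ¬ satIMTL val φ ρ
  | .untl op q φ ψ, ρ => ∃ t' : NNReal, (t' : ℝ≥0∞) ≤ ρ.len ∧ op.eval t' (q : NNReal) ∧
      satIMTL val ψ (ρ.suffix t') ∧ ∀ t : NNReal, t < t' → satIMTL val φ (ρ.suffix t)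

/-- The six path quantifiers `A, A_inf, A_fin, E, E_inf, E_fin`. -/
inductive PathQ : Type
  | A | Ainf | Afin | E | Einf | Efin

/-- `(U_1,…,U_k)^{(n_1,…,n_k)} ⊨ Q Φ` for a path quantifier `Q`: quantification over
the s-paths from the initial configuration that are infinite or deadlocked (`A`, `E`),
infinite (`A_inf`, `E_inf`), resp. finite (`A_fin`, `E_fin`). -/
def SatQ (A : ConjPNTA k) (n : Fin k → ℕ) {α : Type} (val : α → Config A n → Prop)
    (Q : PathQ) (Φ : IMTL α) : Prop :=
  match Q with
  | .A => ∀ ρ : SPath A n,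
      (ρ.IsInfiniteFrom (initConfig A n) ∨ ρ.IsDeadlockedFrom (initConfig A n)) → satIMTL val Φ ρ
  | .Ainf => ∀ ρ : SPath A n, ρ.IsInfiniteFrom (initConfig A n) → satIMTL val Φ ρ
  | .Afin => ∀ ρ : SPath A n, ρ.IsFiniteFrom (initConfig A n) → satIMTL val Φ ρ
  | .E => ∃ ρ : SPath A n,
      (ρ.IsInfiniteFrom (initConfig A n) ∨ ρ.IsDeadlockedFrom (initConfig A n)) ∧ satIMTL val Φ ρ
  | .Einf => ∃ ρ : SPath A n, ρ.IsInfiniteFrom (initConfig A n) ∧ satIMTL val Φ ρ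
  | .Efin => ∃ ρ : SPath A n, ρ.IsFiniteFrom (initConfig A n) ∧ satIMTL val Φ ρ

/-- Atomic propositions of the indexed formula `Φ(i_{l₁},…,i_{l_h})`: a quantified
slot `j < h` together with a state (= atomic proposition) of template `l_j`. -/
def Atoms (A : ConjPNTA k) {h : ℕ} (l : Fin h → Fin k) : Type :=
  Σ j : Fin h, A.State (l j)

/-- The valuation of the atoms, given an assignment `inst` of concrete instances to
the quantified slots: `p(l_j, i_{l_j})` holds iff instance `i_{l_j}` of template `l_j`
is in state `p`. -/
def atomVal (A : ConjPNTA k) (n : Fin k → ℕ) {h : ℕ} (l : Fin h → Fin k)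
    (inst : ∀ j : Fin h, Fin (n (l j))) : Atoms A l → Config A n → Prop :=
  fun a c => c.st (l a.1) (inst a.1) = a.2

/-- `(U_1,…,U_k)^{(n_1,…,n_k)} ⊨ ⋀_{i_{l₁},…,i_{l_h}} Q Φ(i_{l₁},…,i_{l_h})`. -/
def SatFormula (A : ConjPNTA k) (n : Fin k → ℕ) {h : ℕ} (l : Fin h → Fin k)
    (Q : PathQ) (Φ : IMTL (Atoms A l)) : Prop :=
  ∀ inst : ∀ j : Fin h, Fin (n (l j)), SatQ A n (atomVal A n l inst) Q Φ

/-! ### Helpers for networks of two templates -/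

/-- The size function of the system `(U₁,U₂)^{(a,b)}`. -/
def two (a b : ℕ) : Fin 2 → ℕ := fun m => if m.val = 0 then a else b

/-- The valuation interpreting the atoms of a formula `Φ(1_t)` over the *first*
instance of template `t`. -/
def valFirst (A : ConjPNTA 2) (n : Fin 2 → ℕ) (t : Fin 2) (hp : 0 < n t) :
    A.State t → Config A n → Prop :=
  fun p c => c.st t ⟨0, hp⟩ = p


/-! ### Cutoffs for two-template systems -/

/-- Cutoff for the template tracked by the formula `Φ(1₂)` (part (i)):
`2` for `E_inf`, `1` for `E_fin`, `2|U₂| + 1` for `E`. -/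
def cutoffTracked (A : ConjPNTA 2) : PathQ → ℕ
  | PathQ.Einf => 2
  | PathQ.Efin => 1
  | PathQ.E => 2 * A.size 1 + 1
  | _ => 1

/-- Cutoff for the untracked template (part (ii)):
`1` for `E_inf`, `1` for `E_fin`, `2|U₂|` for `E`. -/
def cutoffOther (A : ConjPNTA 2) : PathQ → ℕ
  | PathQ.Einf => 1
  | PathQ.Efin => 1
  | PathQ.E => 2 * A.size 1
  | _ => 1

lemma cutoffTracked_pos (A : ConjPNTA 2) (Q : PathQ) : 0 < cutoffTracked A Q := by
  have := A.size_pos 1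
  cases Q <;> simp only [cutoffTracked] <;> omega

lemma cutoffOther_pos (A : ConjPNTA 2) (Q : PathQ) : 0 < cutoffOther A Q := by
  have := A.size_pos 1
  cases Q <;> simp only [cutoffOther] <;> omega

/-! ### Stuttering, reindexings and local computations -/

/-- `y` is a *stuttering* of `x`: it is obtained from `x` by inserting, between
consecutive elements, finitely many intermediate observations of the same states
with clocks advanced by small delays `δ`, without altering the original elements.
The map `m` sends a position of `y` to the position of `x` it refines. -/
def Stuttering {A : ConjPNTA k} {n : Fin k → ℕ} {c₀ : Config A n}
    (y x : TimedComp A n c₀) : Prop :=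
  ∃ m : ℕ → ℕ, Monotone m ∧ m 0 = 0 ∧
    (∀ w, (y.seq w).isSome → (x.seq (m w)).isSome) ∧
    (∀ w, y.seq w = none → ∃ v, x.seq v = none) ∧
    (∀ v, Set.Finite {w | (y.seq w).isSome ∧ m w = v}) ∧
    (∀ v, (x.seq v).isSome → ∃ w, m w = v ∧ y.seq w = x.seq v) ∧
    (∀ w cy ty cx tx, y.seq w = some (cy, ty) → x.seq (m w) = some (cx, tx) →
      tx ≤ ty ∧ cy.st = cx.st ∧ (∀ l i cxk, cy.cl l i cxk = cx.cl l i cxk + (ty - tx)) ∧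
      ∀ cx' tx', x.seq (m w + 1) = some (cx', tx') → ty ≤ tx')

/-- A reindexing of positions between a timed computation `x` and a timed
computation `y` obtained from `x` by collapsing some steps. -/
def Reindex {A : ConjPNTA k} {n n' : Fin k → ℕ} {c₀ : Config A n} {c₀' : Config A n'}
    (x : TimedComp A n c₀) (y : TimedComp A n' c₀') (m : ℕ → ℕ) : Prop :=
  Monotone m ∧ m 0 = 0 ∧
    (∀ v, (x.seq v).isSome → (y.seq (m v)).isSome) ∧
    (∀ w, (y.seq w).isSome → ∃ v, (x.seq v).isSome ∧ m v = w)

/-- The local timed computation of instance `(l, iy)` of `y` coincides (through the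
reindexing `m`) with the local timed computation of instance `(l, ix)` of `x`:
same times, same states, same clock values. -/
def LocalMatch {A : ConjPNTA k} {n n' : Fin k → ℕ} {c₀ : Config A n} {c₀' : Config A n'}
    (x : TimedComp A n c₀) (y : TimedComp A n' c₀') (m : ℕ → ℕ)
    (l : Fin k) (ix : Fin (n l)) (iy : Fin (n' l)) : Prop :=
  ∀ v c t c' t', x.seq v = some (c, t) → y.seq (m v) = some (c', t') →
    t' = t ∧ c'.st l iy = c.st l ix ∧ c'.cl l iy = c.cl l ix

/-- Instance `(l, i)` of `y` follows the idle local computation: it stutters in the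
initial state `ŝ_l` with all its clocks equal to the elapsed time. -/
def IdleLocal {A : ConjPNTA k} {n : Fin k → ℕ} {c₀ : Config A n}
    (y : TimedComp A n c₀) (l : Fin k) (i : Fin (n l)) : Prop :=
  ∀ v c t, y.seq v = some (c, t) → c.st l i = A.init l ∧ ∀ cx, c.cl l i cx = t

/-- The local computation of instance `(l, i)` of `x` is infinite: the instance takes
infinitely many (observable) synchronization steps. -/
def LocalInfinite {A : ConjPNTA k} {n : Fin k → ℕ} {c₀ : Config A n}
    (x : TimedComp A n c₀) (l : Fin k) (i : Fin (n l)) : Prop :=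
  ∀ N, ∃ v, N ≤ v ∧ ∃ c t c' t', x.seq v = some (c, t) ∧ x.seq (v + 1) = some (c', t') ∧
    t' = t ∧ ¬ (c'.st l i = c.st l i ∧ c'.cl l i = c.cl l i)

lemma two_le_two_succ (n : ℕ) (l : Fin 2) : two 1 n l ≤ two 1 (n + 1) l := by
  unfold two; split <;> omega

lemma c2two (A : ConjPNTA 2) {c₂ : ℕ} (hc : c₂ = 2 ∨ c₂ = 2 * A.size 1 + 1) : 1 < c₂ := by
  have := A.size_pos 1
  rcases hc with h | h <;> omega

lemma c2pos (A : ConjPNTA 2) {c₂ : ℕ} (hc : c₂ = 2 ∨ c₂ = 2 * A.size 1 + 1) : 0 < c₂ :=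
  Nat.lt_of_lt_of_le Nat.one_pos (Nat.le_of_lt (c2two A hc))

lemma npos (A : ConjPNTA 2) {c₂ n : ℕ} (hc : c₂ = 2 ∨ c₂ = 2 * A.size 1 + 1) (hn : c₂ ≤ n) :
    0 < n := Nat.lt_of_lt_of_le (c2pos A hc) hn

section Mono

lemma Config.ext' {A : ConjPNTA k} {n : Fin k → ℕ} {c c' : Config A n}
    (h1 : c.st = c'.st) (h2 : c.cl = c'.cl) : c = c' := by
  cases c; cases c'; dsimp at h1 h2; subst h1; subst h2; rfl

/-- Cast an instance index of the smaller system into the bigger system. -/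
def castIdx (n : ℕ) (l : Fin 2) (i : Fin (two 1 n l)) : Fin (two 1 (n + 1) l) :=
  ⟨i.val, lt_of_lt_of_le i.isLt (two_le_two_succ n l)⟩

/-- Extend a configuration of `(U₁,U₂)^{(1,n)}` at time `t` with an idle
`(n+1)`-th instance of `U₂` whose clocks all equal `t`. -/
def extConfig (A : ConjPNTA 2) (n : ℕ) (c : Config A (two 1 n)) (t : NNReal) :
    Config A (two 1 (n + 1)) where
  st l i := if h : i.val < two 1 n l then c.st l ⟨i.val, h⟩ else A.init l
  cl l i cx := if h : i.val < two 1 n l then c.cl l ⟨i.val, h⟩ cx else t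
  inv_sat l i := by
    by_cases h : i.val < two 1 n l
    · simp only [dif_pos h]; exact c.inv_sat l ⟨i.val, h⟩
    · simp only [dif_neg h, A.inv_init]; trivial

variable {A : ConjPNTA 2} {n : ℕ}

lemma extConfig_st_old (c : Config A (two 1 n)) (t : NNReal) (l : Fin 2) (i : Fin (two 1 n l)) :
    (extConfig A n c t).st l (castIdx n l i) = c.st l i := by
  dsimp only [extConfig, castIdx]
  rw [dif_pos i.isLt]

lemma extConfig_cl_old (c : Config A (two 1 n)) (t : NNReal) (l : Fin 2) (i : Fin (two 1 n l)) :
    (extConfig A n c t).cl l (castIdx n l i) = c.cl l i := by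
  funext cx
  dsimp only [extConfig, castIdx]
  rw [dif_pos i.isLt]

lemma extConfig_st_new (c : Config A (two 1 n)) (t : NNReal) (l : Fin 2)
    (i : Fin (two 1 (n + 1) l)) (h : ¬ i.val < two 1 n l) :
    (extConfig A n c t).st l i = A.init l := by
  dsimp only [extConfig]; rw [dif_neg h]

lemma extConfig_cl_new (c : Config A (two 1 n)) (t : NNReal) (l : Fin 2)
    (i : Fin (two 1 (n + 1) l)) (h : ¬ i.val < two 1 n l) (cx : A.Clock l) :
    (extConfig A n c t).cl l i cx = t := by
  dsimp only [extConfig]; rw [dif_neg h]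

lemma extConfig_init : extConfig A n (initConfig A (two 1 n)) 0 = initConfig A (two 1 (n + 1)) := by
  apply Config.ext'
  · funext l i
    dsimp only [extConfig, initConfig]
    split <;> rfl
  · funext l i cx
    dsimp only [extConfig, initConfig]
    split <;> rfl

/-- If an index of the bigger system is distinct from the (cast of the) index of
the acting instance and is an old index, its uncast version is distinct from the
acting instance's index. -/
lemma old_ne {l : Fin 2} {i : Fin (two 1 n l)} {p : Σ h, Fin (two 1 (n + 1) h)}
    (hp : p ≠ ⟨l, castIdx n l i⟩) (h : p.2.val < two 1 n p.1) :
    (⟨p.1, ⟨p.2.val, h⟩⟩ : Σ h, Fin (two 1 n h)) ≠ ⟨l, i⟩ := by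
  intro hqe
  apply hp
  obtain ⟨h1, h2⟩ := Sigma.mk.inj_iff.mp hqe
  subst h1
  have h3 : (⟨p.2.val, h⟩ : Fin (two 1 n p.1)) = i := eq_of_heq h2
  obtain ⟨p1, p2⟩ := p
  dsimp at h h3 ⊢
  congr 1
  have h4 : p2.val = i.val := congrArg Fin.val h3
  exact Fin.ext h4

lemma ext_eq_old {p : Σ h, Fin (two 1 (n + 1) h)} (h : p.2.val < two 1 n p.1) :
    p = ⟨p.1, castIdx n p.1 ⟨p.2.val, h⟩⟩ := by
  obtain ⟨p1, p2⟩ := p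
  simp only [Sigma.mk.inj_iff, heq_eq_eq, true_and]
  exact Fin.ext rfl

lemma step_ext {c c' : Config A (two 1 n)} {t t' : NNReal} (h : Step c c' t t') :
    Step (extConfig A n c t) (extConfig A n c' t') t t' := by
  rcases h with ⟨d, hd, ⟨hst, hcl, hinv⟩, ht⟩ | ⟨⟨l, i, tr, htr, hsrc, hclk, hguard, htgt,
      hreset, hother⟩, ht⟩
  · left
    refine ⟨d, hd, ⟨?_, ?_, ?_⟩, ht⟩
    · funext l i
      dsimp only [extConfig]
      split
      · rw [hst]
      · rfl
    · intro l i cx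
      dsimp only [extConfig]
      by_cases h : i.val < two 1 n l
      · rw [dif_pos h, dif_pos h, hcl]
      · rw [dif_neg h, dif_neg h, ht]
    · intro l i d' hd'
      by_cases h : i.val < two 1 n l
      · dsimp only [extConfig]
        simp only [dif_pos h]
        exact hinv l ⟨i.val, h⟩ d' hd'
      · dsimp only [extConfig]
        simp only [dif_neg h, A.inv_init]
        trivial
  · right
    refine ⟨⟨l, castIdx n l i, tr, htr, ?_, ?_, ?_, ?_, ?_, ?_⟩, ht⟩
    · rw [extConfig_st_old]; exact hsrc
    · rw [extConfig_cl_old]; exact hclk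
    · intro p hp
      by_cases h : p.2.val < two 1 n p.1
      · have := hguard ⟨p.1, ⟨p.2.val, h⟩⟩ (old_ne hp h)
        rw [ext_eq_old h, extConfig_st_old]
        exact this
      · rw [extConfig_st_new c t p.1 p.2 h]
        exact A.guards_conj l tr htr p.1
    · rw [extConfig_st_old]; exact htgt
    · intro cx
      rw [extConfig_cl_old, extConfig_cl_old]
      exact hreset cx
    · intro p hp
      by_cases h : p.2.val < two 1 n p.1
      · have := hother ⟨p.1, ⟨p.2.val, h⟩⟩ (old_ne hp h)
        rw [ext_eq_old h, extConfig_st_old, extConfig_st_old,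
          extConfig_cl_old, extConfig_cl_old]
        exact this
      · constructor
        · rw [extConfig_st_new c t p.1 p.2 h, extConfig_st_new c' t' p.1 p.2 h]
        · funext cx
          rw [extConfig_cl_new c t p.1 p.2 h, extConfig_cl_new c' t' p.1 p.2 h, ht]

/-- The extended timed computation. -/
def extComp (A : ConjPNTA 2) (n : ℕ)
    (x : TimedComp A (two 1 n) (initConfig A (two 1 n))) :
    TimedComp A (two 1 (n + 1)) (initConfig A (two 1 (n + 1))) where
  seq v := (x.seq v).map fun p => (extConfig A n p.1 p.2, p.2)
  zero_def := by
    show (x.seq 0).map _ = _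
    rw [x.zero_def, Option.map_some, extConfig_init]
  downward := by
    intro v h
    rw [Option.isSome_map] at h ⊢
    exact x.downward v h
  step := by
    intro v c t c' t' h h'
    rw [Option.map_eq_some_iff] at h h'
    obtain ⟨⟨cx, tx⟩, hx, he⟩ := h
    obtain ⟨⟨cx', tx'⟩, hx', he'⟩ := h'
    obtain ⟨he1, he2⟩ := Prod.mk_inj.mp he
    obtain ⟨he1', he2'⟩ := Prod.mk_inj.mp he'
    subst he1; subst he2; subst he1'; subst he2'
    exact step_ext (x.step v cx tx cx' tx' hx hx')

end Mono

-- STATEMENT 14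
theorem monotonicity_construction (A : ConjPNTA 2) (n : ℕ) (hn : 1 ≤ n)
    (x : TimedComp A (two 1 n) (initConfig A (two 1 n))) :
    ∃ y : TimedComp A (two 1 (n + 1)) (initConfig A (two 1 (n + 1))),
      (∀ v, (y.seq v).isSome ↔ (x.seq v).isSome) ∧
      (∀ v c t c' t', x.seq v = some (c, t) → y.seq v = some (c', t') →
        t' = t ∧
        (∀ i : Fin 1, c'.st 0 i = c.st 0 i ∧ c'.cl 0 i = c.cl 0 i) ∧
        (∀ i : Fin n, c'.st 1 i.castSucc = c.st 1 i ∧ c'.cl 1 i.castSucc = c.cl 1 i) ∧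
        c'.st 1 (Fin.last n) = A.init 1 ∧ (∀ cx, c'.cl 1 (Fin.last n) cx = t)) := by
  refine ⟨extComp A n x, ?_, ?_⟩
  · intro v
    show ((x.seq v).map _).isSome ↔ _
    rw [Option.isSome_map]
  · intro v c t c' t' hx hy
    have hy' : (extComp A n x).seq v = some (extConfig A n c t, t) := by
      show (x.seq v).map _ = _
      rw [hx, Option.map_some]
    rw [hy] at hy'
    obtain ⟨hc', ht'⟩ := Prod.mk_inj.mp (Option.some.inj hy')
    subst hc'; subst ht'
    refine ⟨rfl, ?_, ?_, ?_, ?_⟩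
    · exact fun i => ⟨extConfig_st_old c t' 0 i, extConfig_cl_old c t' 0 i⟩
    · exact fun i => ⟨extConfig_st_old c t' 1 i, extConfig_cl_old c t' 1 i⟩
    · exact extConfig_st_new c t' 1 (Fin.last n) (by simp [two, Fin.last])
    · exact fun cx => extConfig_cl_new c t' 1 (Fin.last n) (by simp [two, Fin.last]) cx

end PNTA
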